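/- Let h, a : ℝ → ℝ³ with a differentiable and a′(t) = h(t) ⋉ a(t) for all t, where ⋉ is the su(1,1) bracket. Set z(t) := √(a₁(t)² + a₂(t)²), assume z(t) ≠ 0 and the degeneracy condition a₃(t)² = a₁(t)² + a₂(t)² for all t. Let τ : ℝ → ℝ be differentiable with τ′(t) = −(a₁h₁ + a₂h₂)/z² for all t. Then for any constants A, B, C ∈ ℝ, the function x(t) := (A + Bτ + Cτ²)·a(t) + (a₃/z²)(B + 2Cτ)·(a₂, −a₁, 0) + (C/z²)·(−a₁, −a₂, a₃) is differentiable and satisfies x′(t) = h(t) ⋉ x(t) for all t. -/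

import Mathlib

/-!
Along the light-like solution `a`, the vectors `e := (a₃/z²)(a₂, −a₁, 0)` and
`g := (−a₁, −a₂, a₃)/z²` form a Jordan chain for the flow: `e′ = h ⋉ e − τ′ a` and
`g′ = h ⋉ g − 2τ′ e`, which is where the light-cone condition `a₃² = z²` enters.
With `p(τ) = A + Bτ + Cτ²` the given `x` is `p(τ) a + p′(τ) e + (p″/2) g`, and the chain
rule makes the defects of the three terms cancel, exactly as for the solutions
`p(t) e^{λt}` of a linear system with a Jordan block.
-/

/-- The su(1,1) bracket on `ℝ³`:
`a ⋉ b := (a₃b₂ − a₂b₃, a₁b₃ − a₃b₁, a₁b₂ − a₂b₁)`. -/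
def su11Bracket (a b : Fin 3 → ℝ) : Fin 3 → ℝ :=
  ![a 2 * b 1 - a 1 * b 2, a 0 * b 2 - a 2 * b 0, a 0 * b 1 - a 1 * b 0]

def su11Ad (b : Fin 3 → ℝ) : (Fin 3 → ℝ) →ₗ[ℝ] (Fin 3 → ℝ) where
  toFun := su11Bracket b
  map_add' x y := by ext i; fin_cases i <;> simp [su11Bracket] <;> ring
  map_smul' c x := by ext i; fin_cases i <;> simp [su11Bracket] <;> ring

theorem hasDerivAt_jordanChain_quadratic {E : Type*} [NormedAddCommGroup E] [NormedSpace ℝ E]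
    (L : E →ₗ[ℝ] E) {a e g : ℝ → E} {τ : ℝ → ℝ} {t τ' : ℝ} (A B C : ℝ)
    (hτ : HasDerivAt τ τ' t) (ha : HasDerivAt a (L (a t)) t)
    (he : HasDerivAt e (L (e t) - τ' • a t) t) (hg : HasDerivAt g (L (g t) - (2 * τ') • e t) t) :
    HasDerivAt (fun s => (A + B * τ s + C * τ s ^ 2) • a s + (B + 2 * C * τ s) • e s + C • g s)
      (L ((A + B * τ t + C * τ t ^ 2) • a t + (B + 2 * C * τ t) • e t + C • g t)) t := by
  have hp : HasDerivAt (fun s => A + B * τ s + C * τ s ^ 2) ((B + 2 * C * τ t) * τ') t :=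
    (((hτ.const_mul B).const_add A).add ((hτ.pow 2).const_mul C)).congr_deriv (by ring)
  have hq : HasDerivAt (fun s => B + 2 * C * τ s) (2 * C * τ') t :=
    (hτ.const_mul (2 * C)).const_add B
  refine (((hp.smul ha).add (hq.smul he)).add (hg.const_smul C)).congr_deriv ?_
  simp only [map_add, map_smul]
  module

noncomputable def lightConeChain₁ (a : Fin 3 → ℝ) : Fin 3 → ℝ :=
  (a 2 / (a 0 ^ 2 + a 1 ^ 2)) • ![a 1, -a 0, 0]

noncomputable def lightConeChain₂ (a : Fin 3 → ℝ) : Fin 3 → ℝ :=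
  (a 0 ^ 2 + a 1 ^ 2)⁻¹ • ![-a 0, -a 1, a 2]

noncomputable def effectiveTimeRate (h a : Fin 3 → ℝ) : ℝ :=
  -((a 0 * h 0 + a 1 * h 1) / (a 0 ^ 2 + a 1 ^ 2))

section LightConeChain

variable {h a : ℝ → Fin 3 → ℝ} {t : ℝ}

theorem hasDerivAt_horizontalNormSq (ha : HasDerivAt a (su11Bracket (h t) (a t)) t) :
    HasDerivAt (fun s => a s 0 ^ 2 + a s 1 ^ 2) (2 * a t 2 * su11Bracket (h t) (a t) 2) t :=
  (((hasDerivAt_pi.1 ha 0).pow 2).add ((hasDerivAt_pi.1 ha 1).pow 2)).congr_deriv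
    (by simp [su11Bracket]; ring)

theorem hasDerivAt_lightConeChain₁ (ha : HasDerivAt a (su11Bracket (h t) (a t)) t)
    (hD : a t 0 ^ 2 + a t 1 ^ 2 ≠ 0) (hdeg : a t 2 ^ 2 = a t 0 ^ 2 + a t 1 ^ 2) :
    HasDerivAt (fun s => lightConeChain₁ (a s))
      (su11Bracket (h t) (lightConeChain₁ (a t)) - effectiveTimeRate (h t) (a t) • a t) t := by
  have hk := (hasDerivAt_pi.1 ha 2).div (hasDerivAt_horizontalNormSq ha) hD
  refine hasDerivAt_pi.2 fun i => ?_
  fin_cases i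
  · refine (hk.mul (hasDerivAt_pi.1 ha 1)).congr_deriv ?_
    simp [lightConeChain₁, effectiveTimeRate, su11Bracket]
    field_simp
    grind
  · refine (hk.mul (hasDerivAt_pi.1 ha 0).neg).congr_deriv ?_
    simp [lightConeChain₁, effectiveTimeRate, su11Bracket]
    field_simp
    grind
  · convert hasDerivAt_const t (0 : ℝ) using 1
    · simp [lightConeChain₁]
    simp [lightConeChain₁, effectiveTimeRate, su11Bracket]
    field_simp
    ring

theorem hasDerivAt_lightConeChain₂ (ha : HasDerivAt a (su11Bracket (h t) (a t)) t)
    (hD : a t 0 ^ 2 + a t 1 ^ 2 ≠ 0) (hdeg : a t 2 ^ 2 = a t 0 ^ 2 + a t 1 ^ 2) :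
    HasDerivAt (fun s => lightConeChain₂ (a s))
      (su11Bracket (h t) (lightConeChain₂ (a t))
        - (2 * effectiveTimeRate (h t) (a t)) • lightConeChain₁ (a t)) t := by
  have hk := (hasDerivAt_horizontalNormSq ha).inv hD
  refine hasDerivAt_pi.2 fun i => ?_
  fin_cases i
  · refine (hk.mul (hasDerivAt_pi.1 ha 0).neg).congr_deriv ?_
    simp [lightConeChain₁, lightConeChain₂, effectiveTimeRate, su11Bracket]
    field_simp
    grind
  · refine (hk.mul (hasDerivAt_pi.1 ha 1).neg).congr_deriv ?_
    simp [lightConeChain₁, lightConeChain₂, effectiveTimeRate, su11Bracket]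
    field_simp
    grind
  · refine (hk.mul (hasDerivAt_pi.1 ha 2)).congr_deriv ?_
    simp [lightConeChain₁, lightConeChain₂, effectiveTimeRate, su11Bracket]
    field_simp
    grind

end LightConeChain

/-- General solution of the SU(1,1)-type equation `ẋ = h ⋉ x` in the degenerate
case `a₃² = a₁² + a₂²` (light cone of the su(1,1) form), built from a special
solution `a` (with `a′ = h ⋉ a` and `z(t) = √(a₁² + a₂²) ≠ 0`) and an effective
time `τ` with `τ′ = −(a₁h₁ + a₂h₂)/z²`: for any constants `A, B, C`,
`x(t) = (A + Bτ + Cτ²)·a + (a₃/z²)(B + 2Cτ)·(a₂, −a₁, 0) + (C/z²)·(−a₁, −a₂, a₃)`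
is differentiable and satisfies `x′(t) = h(t) ⋉ x(t)`. -/
theorem stmt_14 (h a : ℝ → Fin 3 → ℝ) (τ : ℝ → ℝ) (A B C : ℝ)
    (ha : ∀ t : ℝ, HasDerivAt a (su11Bracket (h t) (a t)) t)
    (hz : ∀ t : ℝ, Real.sqrt (a t 0 ^ 2 + a t 1 ^ 2) ≠ 0)
    (hdeg : ∀ t : ℝ, a t 2 ^ 2 = a t 0 ^ 2 + a t 1 ^ 2)
    (hτ : ∀ t : ℝ, HasDerivAt τ
      (-((a t 0 * h t 0 + a t 1 * h t 1) / (a t 0 ^ 2 + a t 1 ^ 2))) t)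
    (x : ℝ → Fin 3 → ℝ)
    (hx : ∀ t : ℝ, x t =
      (A + B * τ t + C * τ t ^ 2) • a t
      + (a t 2 / (a t 0 ^ 2 + a t 1 ^ 2) * (B + 2 * C * τ t)) •
          ![a t 1, -(a t 0), 0]
      + (C / (a t 0 ^ 2 + a t 1 ^ 2)) • ![-(a t 0), -(a t 1), a t 2]) :
    ∀ t : ℝ, HasDerivAt x (su11Bracket (h t) (x t)) t := by
  have hD s : a s 0 ^ 2 + a s 1 ^ 2 ≠ 0 := fun h0 => hz s (by rw [h0, Real.sqrt_zero])
  have hx_chain : x = fun s => (A + B * τ s + C * τ s ^ 2) • a s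
      + (B + 2 * C * τ s) • lightConeChain₁ (a s) + C • lightConeChain₂ (a s) := by
    funext s
    rw [hx s, lightConeChain₁, lightConeChain₂, smul_smul, smul_smul, mul_comm (B + _),
      div_eq_mul_inv C]
  intro t
  rw [hx_chain]
  exact hasDerivAt_jordanChain_quadratic (su11Ad (h t)) A B C (hτ t) (ha t)
    (hasDerivAt_lightConeChain₁ (ha t) (hD t) (hdeg t))
    (hasDerivAt_lightConeChain₂ (ha t) (hD t) (hdeg t))
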